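/- For every finite game graph G, the set of histories of G that yield hierarchical information is a regular language over the alphabet V, i.e., it is recognized by some deterministic finite automaton over V. -/

import Mathlib

/-- A finite game graph for `n` players: positions `V` with initial position `init`,
action sets `A i`, observation sets `B i`, a move relation labelled by action
profiles (with no dead ends), and observation functions. -/
structure GameGraph (n : ℕ) (V : Type) (A : Fin n → Type) (B : Fin n → Type) where
  init : V
  move : V → (∀ i, A i) → V → Prop
  noDeadEnd : ∀ v a, ∃ w, move v a w
  obs : ∀ i : Fin n, V → B i

/-- A Moore machine with finite state set `Q`, input alphabet `σ`, output alphabet `γ`. -/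
structure Moore (σ γ : Type) where
  Q : Type
  finQ : Fintype Q
  q0 : Q
  δ : Q → σ → Q
  out : Q → γ

namespace Moore

/-- The output letter of a Moore machine after reading a word. -/
def output {σ γ : Type} (mc : Moore σ γ) (w : List σ) : γ :=
  mc.out (w.foldl mc.δ mc.q0)

/-- The output word of a Moore machine along a word: the `k`-th letter is the
output after reading the prefix of length `k+1`. -/
def outWord {σ γ : Type} (mc : Moore σ γ) (w : List σ) : List γ :=
  ((w.scanl mc.δ mc.q0).drop 1).map mc.out

end Moore

/-- A deterministic parity automaton over alphabet `α`. -/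
structure ParityAut (α : Type) where
  Q : Type
  finQ : Fintype Q
  q0 : Q
  δ : Q → α → Q
  prio : Q → ℕ

namespace ParityAut

/-- The run of a deterministic parity automaton on an infinite word. -/
def run {α : Type} (d : ParityAut α) (f : ℕ → α) : ℕ → d.Q
  | 0 => d.q0
  | t + 1 => d.δ (run d f t) (f t)

/-- Parity acceptance: the least priority occurring infinitely often is even. -/
def Accepts {α : Type} (d : ParityAut α) (f : ℕ → α) : Prop :=
  Even (sInf { p | ∃ᶠ t in Filter.atTop, d.prio (d.run f t) = p })

end ParityAut

/-- A deterministic Büchi automaton over alphabet `α` with state set `σ`. -/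
structure DetBuchi (α σ : Type) where
  q0 : σ
  δ : σ → α → σ
  accept : Set σ

namespace DetBuchi

/-- The run of a deterministic Büchi automaton on an infinite word. -/
def run {α σ : Type} (d : DetBuchi α σ) (f : ℕ → α) : ℕ → σ
  | 0 => d.q0
  | t + 1 => d.δ (run d f t) (f t)

/-- Büchi acceptance: the run visits accepting states infinitely often. -/
def Accepts {α σ : Type} (d : DetBuchi α σ) (f : ℕ → α) : Prop :=
  ∃ᶠ t in Filter.atTop, d.run f t ∈ d.accept

end DetBuchi

namespace GameGraph

variable {n : ℕ} {V : Type} {A B : Fin n → Type}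

/-- Two positions are linked by a move (for some action profile). -/
def step (G : GameGraph n V A B) (u w : V) : Prop := ∃ a, G.move u a w

/-- A history: a nonempty sequence starting at the initial position, each
consecutive pair lying on a move. -/
def IsHistory (G : GameGraph n V A B) (π : List V) : Prop :=
  π.head? = some G.init ∧ π.Chain' G.step

/-- The observation sequence of player `i` along a history (the observation at
the initial position is discarded). -/
def obsSeq (G : GameGraph n V A B) (i : Fin n) (π : List V) : List (B i) :=
  (π.drop 1).map (G.obs i)

/-- Histories are indistinguishable for player `i` if they yield the same observations. -/
def Indist (G : GameGraph n V A B) (i : Fin n) (π π' : List V) : Prop :=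
  G.obsSeq i π = G.obsSeq i π'

/-- The information set of player `i` at history `π`. -/
def InfoSet (G : GameGraph n V A B) (i : Fin n) (π : List V) : Set (List V) :=
  { π' | G.IsHistory π' ∧ G.Indist i π π' }

/-- A history yields hierarchical information if the information sets of players
are totally ordered by inclusion. -/
def HistHI (G : GameGraph n V A B) (π : List V) : Prop :=
  ∀ i j : Fin n, G.InfoSet i π ⊆ G.InfoSet j π ∨ G.InfoSet j π ⊆ G.InfoSet i π

/-- Static hierarchical information: there is a total order of the players such
that along every history, the information sets respect this order. -/
def StaticHI (G : GameGraph n V A B) : Prop :=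
  ∃ ord : Fin n → Fin n → Prop, IsLinearOrder (Fin n) ord ∧
    ∀ i j : Fin n, ord i j → ∀ π, G.IsHistory π → G.InfoSet i π ⊆ G.InfoSet j π

/-- Hierarchical observation: there is a total order of the players such that
the observation of a smaller player determines that of a bigger player, positionally. -/
def HierObs (G : GameGraph n V A B) : Prop :=
  ∃ ord : Fin n → Fin n → Prop, IsLinearOrder (Fin n) ord ∧
    ∀ i j : Fin n, ord i j → ∀ v v' : V, G.obs i v = G.obs i v' → G.obs j v = G.obs j v'

/-- Dynamic hierarchical information: every history yields hierarchical information. -/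
def DynamicHI (G : GameGraph n V A B) : Prop := ∀ π, G.IsHistory π → G.HistHI π

/-- The prefix `v₀ … v_t` of a play, as a list. -/
def playPrefix (f : ℕ → V) (t : ℕ) : List V := (List.range (t + 1)).map f

/-- A play: an infinite sequence all of whose prefixes are histories. -/
def IsPlay (G : GameGraph n V A B) (f : ℕ → V) : Prop :=
  ∀ t, G.IsHistory (playPrefix f t)

/-- A play yields recurring hierarchical information if infinitely many of its
prefix histories yield hierarchical information. -/
def PlayRecurringHI (G : GameGraph n V A B) (f : ℕ → V) : Prop :=
  ∀ T, ∃ t, T ≤ t ∧ G.HistHI (playPrefix f t)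

/-- A game yields recurring hierarchical information if every play does. -/
def RecurringHI (G : GameGraph n V A B) : Prop :=
  ∀ f, G.IsPlay f → G.PlayRecurringHI f

/-- `[t, t+ℓ]` is a gap of the play `f`: no prefix of length `r ∈ [t, t+ℓ]` yields
hierarchical information.  The length of this gap is `ℓ + 1`. -/
def IsGap (G : GameGraph n V A B) (f : ℕ → V) (t ℓ : ℕ) : Prop :=
  ∀ r, t ≤ r → r ≤ t + ℓ → ¬ G.HistHI (playPrefix f r)

/-- Information-consistency of a strategy profile: each component is constant on
indistinguishability classes of histories. -/
def Consistent (G : GameGraph n V A B) (s : ∀ i, List V → A i) : Prop :=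
  ∀ (i : Fin n) (π π' : List V),
    G.IsHistory π → G.IsHistory π' → G.Indist i π π' → s i π = s i π'

/-- A play follows a strategy profile. -/
def Follows (G : GameGraph n V A B) (s : ∀ i, List V → A i) (f : ℕ → V) : Prop :=
  f 0 = G.init ∧ ∀ t, ∃ a, G.move (f t) a (f (t + 1)) ∧ ∀ i, a i = s i (playPrefix f t)

/-- A distributed winning strategy for winning condition `W`: an information-consistent
profile all of whose outcomes lie in `W`. -/
def WinningProfile (G : GameGraph n V A B) (W : Set (ℕ → V)) (s : ∀ i, List V → A i) : Prop :=
  G.Consistent s ∧ ∀ f, G.Follows s f → f ∈ W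

/-- A finite-state strategy for player `i`: implemented by a Moore machine reading
the observation sequence of the history. -/
def FinStateStrategy (G : GameGraph n V A B) (i : Fin n) (si : List V → A i) : Prop :=
  ∃ mc : Moore (B i) (A i), ∀ π, G.IsHistory π → si π = mc.output (G.obsSeq i π)

/-- The game admits a distributed winning strategy for `W`. -/
def HasDWS (G : GameGraph n V A B) (W : Set (ℕ → V)) : Prop :=
  ∃ s : ∀ i, List V → A i, G.WinningProfile W s

/-- The game admits a finite-state distributed winning strategy for `W`. -/
def HasFinDWS (G : GameGraph n V A B) (W : Set (ℕ → V)) : Prop :=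
  ∃ s : ∀ i, List V → A i, G.WinningProfile W s ∧ ∀ i, G.FinStateStrategy i (s i)

/-- `i ⪯_π j` : at history `π`, player `i` is at least as informed as player `j`. -/
def infoLE (G : GameGraph n V A B) (π : List V) (i j : Fin n) : Prop :=
  G.InfoSet i π ⊆ G.InfoSet j π

/-- The information rank of player `i` at history `π`: the number of players `j`
with `j ≺_π i`, or with `j < i` and `j ≈_π i`. -/
noncomputable def rank (G : GameGraph n V A B) (i : Fin n) (π : List V) : ℕ :=
  Nat.card {j : Fin n //
    (G.infoLE π j i ∧ ¬ G.infoLE π i j) ∨ (j < i ∧ G.infoLE π j i ∧ G.infoLE π i j)}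

/-- The signal `λ_j^i`: the set of observations of player `i` at the last positions of
histories in the information set of player `j`. -/
def lam (G : GameGraph n V A B) (i j : Fin n) (π : List V) : Set (B i) :=
  { b | ∃ π', π' ∈ G.InfoSet j π ∧ ∃ v, π'.getLast? = some v ∧ G.obs i v = b }

/-- Players `i` and `j` cross at stage `ℓ` of the play `f`. -/
def Crossing (G : GameGraph n V A B) (f : ℕ → V) (ℓ : ℕ) (i j : Fin n) : Prop :=
  G.InfoSet i (playPrefix f ℓ) ⊂ G.InfoSet j (playPrefix f ℓ) ∧
  G.InfoSet j (playPrefix f (ℓ + 1)) ⊂ G.InfoSet i (playPrefix f (ℓ + 1))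

/-- A game is cross-free if no two players cross at any stage of any play. -/
def CrossFree (G : GameGraph n V A B) : Prop :=
  ∀ f, G.IsPlay f → ∀ (ℓ : ℕ) (i j : Fin n), ¬ G.Crossing f ℓ i j

end GameGraph

/-! Inclusions between the information sets at a nonempty history `π` depend only on the
set of pairs (last position of `π'`, players who cannot tell `π'` from `π`), `π'` ranging over
the histories as long as `π`. Reading one more letter `a` extends each such `π'` by a successor
`w` and keeps exactly the players who observe the same at `a` and at `w`. Hence this finite
profile, together with the last letter and whether the word is a history, is a right congruence
of finite index that decides the language, which is therefore regular by Myhill–Nerode. -/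

theorem Language.isRegular_of_append_singleton_congr {α σ : Type*} [Finite σ]
    {L : Language α} (f : List α → σ)
    (hstep : ∀ x y a, f x = f y → f (x ++ [a]) = f (y ++ [a]))
    (hmem : ∀ x y, f x = f y → (x ∈ L ↔ y ∈ L)) : L.IsRegular := by
  have hcongr : ∀ x y z, f x = f y → f (x ++ z) = f (y ++ z) := by
    intro x y z hxy
    induction z using List.reverseRecOn with
    | nil => simpa using hxy
    | append_singleton z a ih => simpa only [← List.append_assoc] using hstep _ _ a ih
  have hquot : ∀ x y, f x = f y → L.leftQuotient x = L.leftQuotient y := fun x y hxy =>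
    Set.ext fun z => hmem _ _ (hcongr x y z hxy)
  refine Language.IsRegular.of_finite_range_leftQuotient <|
    (Set.finite_range fun s => L.leftQuotient (Function.invFun f s)).subset ?_
  rintro _ ⟨x, rfl⟩
  exact ⟨f x, hquot _ _ (Function.invFun_eq ⟨x, rfl⟩)⟩

namespace GameGraph

variable {n : ℕ} {V : Type} {A B : Fin n → Type} (G : GameGraph n V A B)

def profile (π : List V) : Set (Option V × Set (Fin n)) :=
  {p | ∃ π', G.IsHistory π' ∧ π'.length = π.length ∧
    p = (π'.getLast?, {i | G.Indist i π π'})}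

def summary (π : List V) : Option V × Prop × Set (Option V × Set (Fin n)) :=
  (π.getLast?, G.IsHistory π, G.profile π)

variable {G}

theorem isHistory_iff {π : List V} :
    G.IsHistory π ↔ π.head? = some G.init ∧ π.IsChain G.step :=
  Iff.rfl

theorem IsHistory.ne_nil {π : List V} (h : G.IsHistory π) : π ≠ [] := by
  rintro rfl
  simp [IsHistory] at h

theorem isHistory_append_singleton {π : List V} (hπ : π ≠ []) (v : V) :
    G.IsHistory (π ++ [v]) ↔ G.IsHistory π ∧ ∀ u ∈ π.getLast?, G.step u v := by
  simp [isHistory_iff, List.head?_append_of_ne_nil _ hπ, List.isChain_append, and_assoc]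

theorem obsSeq_append_singleton (i : Fin n) {π : List V} (hπ : π ≠ []) (v : V) :
    G.obsSeq i (π ++ [v]) = G.obsSeq i π ++ [G.obs i v] := by
  obtain ⟨x, xs, rfl⟩ := List.exists_cons_of_ne_nil hπ
  simp [obsSeq]

theorem indist_append_singleton (i : Fin n) {π π' : List V} (hπ : π ≠ []) (hπ' : π' ≠ [])
    (v w : V) :
    G.Indist i (π ++ [v]) (π' ++ [w]) ↔ G.Indist i π π' ∧ G.obs i v = G.obs i w := by
  simp [Indist, obsSeq_append_singleton i hπ, obsSeq_append_singleton i hπ']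

theorem Indist.length_eq {i : Fin n} {π π' : List V} (hπ : π ≠ []) (hπ' : π' ≠ [])
    (h : G.Indist i π π') : π.length = π'.length := by
  have := congrArg List.length h
  simp only [obsSeq, List.length_map, List.length_drop] at this
  have := List.length_pos_iff.mpr hπ
  have := List.length_pos_iff.mpr hπ'
  omega

theorem profile_append_singleton {x : List V} (hx : x ≠ []) (a : V) :
    G.profile (x ++ [a]) = {p | ∃ q ∈ G.profile x, ∃ w, (∀ u ∈ q.1, G.step u w) ∧
      p = (some w, q.2 ∩ {i | G.obs i a = G.obs i w})} := by
  ext p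
  constructor
  · rintro ⟨π, hist, hlen, rfl⟩
    obtain ⟨π', w, rfl⟩ : ∃ π' w, π = π' ++ [w] :=
      (List.eq_nil_or_concat' π).resolve_left hist.ne_nil
    have hπ' : π' ≠ [] := by
      rintro rfl
      exact hx (by simpa using hlen)
    rw [isHistory_append_singleton hπ'] at hist
    refine ⟨_, ⟨π', hist.1, by simpa using hlen, rfl⟩, w, hist.2, ?_⟩
    ext <;> simp [indist_append_singleton _ hx hπ']
  · rintro ⟨_, ⟨π', hist, hlen, rfl⟩, w, hstep, rfl⟩
    have hπ' := hist.ne_nil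
    refine ⟨π' ++ [w], (isHistory_append_singleton hπ' w).2 ⟨hist, hstep⟩, by simp [hlen], ?_⟩
    ext <;> simp [indist_append_singleton _ hx hπ']

theorem infoSet_subset_iff {π : List V} (hπ : π ≠ []) (i j : Fin n) :
    G.InfoSet i π ⊆ G.InfoSet j π ↔ ∀ p ∈ G.profile π, i ∈ p.2 → j ∈ p.2 := by
  constructor
  · rintro h _ ⟨π', hist, -, rfl⟩ hi
    exact (h ⟨hist, hi⟩).2
  · rintro h π' ⟨hist, hi⟩
    exact ⟨hist, h _ ⟨π', hist, (hi.length_eq hπ hist.ne_nil).symm, rfl⟩ hi⟩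

theorem histHI_iff {π : List V} (hπ : π ≠ []) :
    G.HistHI π ↔ ∀ i j : Fin n, (∀ p ∈ G.profile π, i ∈ p.2 → j ∈ p.2) ∨
      (∀ p ∈ G.profile π, j ∈ p.2 → i ∈ p.2) := by
  simp only [HistHI, infoSet_subset_iff hπ]

theorem eq_nil_iff_of_summary_eq {x y : List V} (h : G.summary x = G.summary y) :
    x = [] ↔ y = [] := by
  simp only [summary, Prod.mk.injEq] at h
  simp only [← List.getLast?_eq_none_iff, h.1]

theorem summary_append_singleton {x y : List V} (h : G.summary x = G.summary y) (a : V) :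
    G.summary (x ++ [a]) = G.summary (y ++ [a]) := by
  rcases eq_or_ne x [] with rfl | hx
  · rw [(eq_nil_iff_of_summary_eq h).mp rfl]
  have hy : y ≠ [] := mt (eq_nil_iff_of_summary_eq h).mpr hx
  simp only [summary, Prod.mk.injEq] at h
  obtain ⟨hlast, hhist, hprof⟩ := h
  simp only [summary, List.getLast?_concat, isHistory_append_singleton hx,
    isHistory_append_singleton hy, profile_append_singleton hx, profile_append_singleton hy,
    hhist, hlast, hprof]

theorem isHistory_and_histHI_congr {x y : List V} (h : G.summary x = G.summary y) :
    G.IsHistory x ∧ G.HistHI x ↔ G.IsHistory y ∧ G.HistHI y := by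
  rcases eq_or_ne x [] with rfl | hx
  · rw [(eq_nil_iff_of_summary_eq h).mp rfl]
  have hy : y ≠ [] := mt (eq_nil_iff_of_summary_eq h).mpr hx
  simp only [summary, Prod.mk.injEq] at h
  obtain ⟨-, hhist, hprof⟩ := h
  rw [hhist, histHI_iff hx, histHI_iff hy, hprof]

end GameGraph

theorem statement5_general {n : ℕ} {V : Type} {A B : Fin n → Type}
    [Fintype V]
    (G : GameGraph n V A B) :
    ∃ (σ : Type) (_ : Fintype σ) (M : DFA V σ),
      ∀ π : List V, π ∈ M.accepts ↔ (G.IsHistory π ∧ G.HistHI π) := by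
  obtain ⟨σ, hσ, M, hM⟩ := Language.isRegular_of_append_singleton_congr
    (L := {π | G.IsHistory π ∧ G.HistHI π}) G.summary
    (fun _ _ a h => GameGraph.summary_append_singleton h a)
    (fun _ _ => GameGraph.isHistory_and_histHI_congr)
  exact ⟨σ, hσ, M, fun π => by rw [hM]; rfl⟩

/-- For every finite game graph, the set of histories yielding hierarchical
information is a regular language over the alphabet `V`: it is recognized by a deterministic
finite automaton with a finite state set. -/
theorem statement5 {n : ℕ} {V : Type} {A B : Fin n → Type}
    [Fintype V] [∀ i, Fintype (A i)] [∀ i, Fintype (B i)]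
    (G : GameGraph n V A B) :
    ∃ (σ : Type) (_ : Fintype σ) (M : DFA V σ),
      ∀ π : List V, π ∈ M.accepts ↔ (G.IsHistory π ∧ G.HistHI π) :=
  statement5_general G
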